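/- The extended Wigner transform commutes with the two-dimensional harmonic oscillator: for every Schwartz function F : ℝ² → ℂ, H(W̃F) = W̃(HF), where H = (1/2)(−∂²/∂x² − ∂²/∂y² + x² + y²). -/

import Mathlib

/-!
Writing `R (x, p) = ((x + p) / √2, (x - p) / √2)`, the extended Wigner transform is
`W̃F (x, ξ) = (2π)^{-1/2} ∫ e^{ipξ} (F ∘ R) (x, p) dp`, a partial Fourier transform in the
second variable of `F ∘ R`. Since `R` is orthogonal, `H (F ∘ R) = (H F) ∘ R`: the potential
because `R` preserves `x² + p²`, the Laplacian by the parallelogram identity for second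
directional derivatives. The partial Fourier transform commutes with the oscillator: `x` and `∂ₓ`
pass under the integral, multiplication by `p` becomes `-i ∂_ξ`, and `∂_p` becomes multiplication
by `-iξ` (integration by parts).
-/

open MeasureTheory

/-- One-dimensional Wigner transform. -/
noncomputable def Wig (f g : ℝ → ℂ) (x ξ : ℝ) : ℂ :=
  (Real.sqrt (2 * Real.pi) : ℂ)⁻¹ *
    ∫ p : ℝ, Complex.exp (Complex.I * p * ξ) *
      (starRingEnd ℂ) (f ((x + p) / Real.sqrt 2)) * g ((x - p) / Real.sqrt 2)

/-- Extended Wigner transform of a function of two variables. -/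
noncomputable def ExtW (F : ℝ → ℝ → ℂ) (x ξ : ℝ) : ℂ :=
  (Real.sqrt (2 * Real.pi) : ℂ)⁻¹ *
    ∫ p : ℝ, Complex.exp (Complex.I * p * ξ) *
      F ((x + p) / Real.sqrt 2) ((x - p) / Real.sqrt 2)

/-- The n-th Hermite function. -/
noncomputable def hermiteFun (n : ℕ) (x : ℝ) : ℝ :=
  Real.pi ^ (-(1/4 : ℝ)) * ((Nat.factorial n : ℝ)) ^ (-(1/2 : ℝ)) *
    (2 : ℝ) ^ (-(n : ℝ)/2) * (-1 : ℝ)^n * Real.exp (x^2/2) *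
    iteratedDeriv n (fun t => Real.exp (-t^2)) x

/-- Generalized Laguerre polynomial via the Rodrigues formula. -/
noncomputable def lagPoly (n α : ℕ) (x : ℝ) : ℝ :=
  Real.exp x / (Nat.factorial n * x ^ α) *
    iteratedDeriv n (fun t => Real.exp (-t) * t ^ (n + α)) x

/-- Two-dimensional Wigner transform. -/
noncomputable def Wig2 (f g : ℝ × ℝ → ℂ) (x ξ : ℝ × ℝ) : ℂ :=
  (2 * Real.pi : ℂ)⁻¹ * ∫ p : ℝ × ℝ,
    Complex.exp (Complex.I * (p.1 * ξ.1 + p.2 * ξ.2)) *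
    (starRingEnd ℂ) (f ((x.1 + p.1) / Real.sqrt 2, (x.2 + p.2) / Real.sqrt 2)) *
    g ((x.1 - p.1) / Real.sqrt 2, (x.2 - p.2) / Real.sqrt 2)

/-- The 2D harmonic oscillator Hamiltonian H = (1/2)(−∂²/∂x² − ∂²/∂y² + x² + y²). -/
noncomputable def Ham (G : ℝ → ℝ → ℂ) : ℝ → ℝ → ℂ :=
  fun x y => (1/2 : ℂ) *
    (-(deriv (deriv (fun t => G t y)) x) - deriv (deriv (fun t => G x t)) y
      + ((x : ℂ)^2 + (y : ℂ)^2) * G x y)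

open Complex SchwartzMap LineDeriv

local notation "e₁" => ((1 : ℝ), (0 : ℝ))
local notation "e₂" => ((0 : ℝ), (1 : ℝ))

theorem lineDerivOp_parallelogram {V E : Type*} [AddCommGroup V] [AddCommGroup E]
    [LineDeriv V E E] [LineDerivAdd V E E] (a b : V) (f : E) :
    ∂_{a + b} (∂_{a + b} f) + ∂_{a - b} (∂_{a - b} f) =
      2 • (∂_{a} (∂_{a} f) + ∂_{b} (∂_{b} f)) := by
  simp only [sub_eq_add_neg, lineDerivOp_left_add, lineDerivOp_add, lineDerivOp_left_neg,
    lineDerivOp_neg]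
  abel

theorem lineDerivOp_lineDerivOp_left_smul {R V E : Type*} [Monoid R] [MulAction R V]
    [MulAction R E] [LineDeriv V E E] [LineDerivSMul R V E E] [LineDerivLeftSMul R V E E]
    (c : R) (v : V) (f : E) :
    ∂_{c • v} (∂_{c • v} f) = c ^ 2 • ∂_{v} (∂_{v} f) := by
  rw [lineDerivOp_left_smul, lineDerivOp_left_smul, lineDerivOp_smul, smul_smul, sq]

namespace SchwartzMap

variable {E V : Type*} [NormedAddCommGroup E] [NormedSpace ℝ E]
  [NormedAddCommGroup V] [NormedSpace ℝ V]

theorem exists_norm_le_mul_inv_one_add_sq_snd (G : 𝓢(E × ℝ, V)) :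
    ∃ C, ∀ v : E × ℝ, ‖G v‖ ≤ C * (1 + v.2 ^ 2)⁻¹ := by
  refine ⟨2 ^ 2 * (Finset.Iic (2, 0)).sup (fun m => SchwartzMap.seminorm ℝ m.1 m.2) G,
    fun v => ?_⟩
  have hG := one_add_le_sup_seminorm_apply (𝕜 := ℝ) (m := (2, 0)) le_rfl le_rfl G v
  rw [norm_iteratedFDeriv_zero] at hG
  have hv : 1 + v.2 ^ 2 ≤ (1 + ‖v‖) ^ 2 := by
    have h2 : |v.2| ≤ ‖v‖ := norm_snd_le v
    nlinarith [abs_nonneg v.2, sq_abs v.2]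
  rw [← div_eq_mul_inv, le_div_iff₀ (by positivity)]
  exact (mul_le_mul_of_nonneg_left hv (norm_nonneg _)).trans (by rw [mul_comm]; exact hG)

theorem integrable_comp_mk_left (G : 𝓢(E × ℝ, V)) (x : E) :
    MeasureTheory.Integrable (fun p : ℝ => G (x, p)) := by
  obtain ⟨C, hC⟩ := G.exists_norm_le_mul_inv_one_add_sq_snd
  exact (integrable_inv_one_add_sq.const_mul C).mono'
    (G.continuous.comp (Continuous.prodMk_right x)).aestronglyMeasurable
    (.of_forall fun p => hC (x, p))

theorem hasDerivAt_comp_mk_left (G : 𝓢(ℝ × ℝ, V)) (a b : ℝ) :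
    HasDerivAt (fun t => G (t, b)) (∂_{e₁} G (a, b)) a :=
  (G.hasFDerivAt (a, b)).comp_hasDerivAt a ((hasDerivAt_id a).prodMk (hasDerivAt_const a b))

theorem hasDerivAt_comp_mk_right (G : 𝓢(ℝ × ℝ, V)) (a b : ℝ) :
    HasDerivAt (fun t => G (a, t)) (∂_{e₂} G (a, b)) b :=
  (G.hasFDerivAt (a, b)).comp_hasDerivAt b ((hasDerivAt_const b a).prodMk (hasDerivAt_id b))

theorem deriv_deriv_comp_mk_left (G : 𝓢(ℝ × ℝ, V)) (a b : ℝ) :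
    deriv (deriv fun t => G (t, b)) a = ∂_{e₁} (∂_{e₁} G) (a, b) := by
  rw [funext fun t => (G.hasDerivAt_comp_mk_left t b).deriv]
  exact (hasDerivAt_comp_mk_left _ a b).deriv

theorem deriv_deriv_comp_mk_right (G : 𝓢(ℝ × ℝ, V)) (a b : ℝ) :
    deriv (deriv fun t => G (a, t)) b = ∂_{e₂} (∂_{e₂} G) (a, b) := by
  rw [funext fun t => (G.hasDerivAt_comp_mk_right a t).deriv]
  exact (hasDerivAt_comp_mk_right _ a b).deriv

end SchwartzMap

theorem norm_cexp_I_mul_ofReal_mul_ofReal (p ξ : ℝ) : ‖cexp (I * p * ξ)‖ = 1 := by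
  rw [show I * p * ξ = ((p * ξ : ℝ) : ℂ) * I by push_cast; ring, norm_exp_ofReal_mul_I]

theorem hasDerivAt_cexp_const_mul_ofReal (c : ℂ) (t : ℝ) :
    HasDerivAt (fun s : ℝ => cexp (c * s)) (c * cexp (c * t)) t := by
  simpa [mul_comm] using (((hasDerivAt_id t).ofReal_comp).const_mul c).cexp

theorem integrable_cexp_mul_comp_mk_left (G : 𝓢(ℝ × ℝ, ℂ)) (x ξ : ℝ) :
    Integrable fun p : ℝ => cexp (I * p * ξ) * G (x, p) :=
  (G.integrable_comp_mk_left x).bdd_mul (by fun_prop)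
    (.of_forall fun p => (norm_cexp_I_mul_ofReal_mul_ofReal p ξ).le)

noncomputable def partialFourier (x ξ : ℝ) : 𝓢(ℝ × ℝ, ℂ) →ₗ[ℂ] ℂ where
  toFun G := ∫ p : ℝ, cexp (I * p * ξ) * G (x, p)
  map_add' G H := by
    simp only [add_apply, mul_add]
    exact integral_add (integrable_cexp_mul_comp_mk_left G x ξ)
      (integrable_cexp_mul_comp_mk_left H x ξ)
  map_smul' c G := by
    simp only [smul_apply, smul_eq_mul, RingHom.id_apply, ← integral_const_mul]
    congr 1 with p
    ring

theorem partialFourier_apply (x ξ : ℝ) (G : 𝓢(ℝ × ℝ, ℂ)) :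
    partialFourier x ξ G = ∫ p : ℝ, cexp (I * p * ξ) * G (x, p) := rfl

theorem hasTemperateGrowth_ofReal_snd :
    Function.HasTemperateGrowth fun v : ℝ × ℝ => (v.2 : ℂ) :=
  (ofRealCLM.comp (ContinuousLinearMap.snd ℝ ℝ ℝ)).hasTemperateGrowth

noncomputable def mulSnd : 𝓢(ℝ × ℝ, ℂ) →L[ℂ] 𝓢(ℝ × ℝ, ℂ) :=
  smulLeftCLM ℂ fun v : ℝ × ℝ => (v.2 : ℂ)

theorem mulSnd_apply (G : 𝓢(ℝ × ℝ, ℂ)) (v : ℝ × ℝ) : mulSnd G v = v.2 * G v := by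
  simp [mulSnd, smulLeftCLM_apply_apply hasTemperateGrowth_ofReal_snd]

theorem hasDerivAt_partialFourier_fst (G : 𝓢(ℝ × ℝ, ℂ)) (x ξ : ℝ) :
    HasDerivAt (fun t => partialFourier t ξ G) (partialFourier x ξ (∂_{e₁} G)) x := by
  obtain ⟨C, hC⟩ := (∂_{e₁} G).exists_norm_le_mul_inv_one_add_sq_snd
  refine (hasDerivAt_integral_of_dominated_loc_of_deriv_le (bound := fun p => C * (1 + p ^ 2)⁻¹)
    Filter.univ_mem
    (.of_forall fun t => (integrable_cexp_mul_comp_mk_left G t ξ).aestronglyMeasurable)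
    (integrable_cexp_mul_comp_mk_left G x ξ)
    (integrable_cexp_mul_comp_mk_left _ x ξ).aestronglyMeasurable
    (.of_forall fun p t _ => ?_) (integrable_inv_one_add_sq.const_mul C)
    (.of_forall fun p t _ => (G.hasDerivAt_comp_mk_left t p).const_mul _)).2
  rw [norm_mul, norm_cexp_I_mul_ofReal_mul_ofReal, one_mul]
  exact hC (t, p)

theorem hasDerivAt_partialFourier_snd (G : 𝓢(ℝ × ℝ, ℂ)) (x ξ : ℝ) :
    HasDerivAt (fun s => partialFourier x s G) (I * partialFourier x ξ (mulSnd G)) ξ := by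
  rw [partialFourier_apply, ← integral_const_mul]
  refine (hasDerivAt_integral_of_dominated_loc_of_deriv_le
    (F' := fun s p => I * (cexp (I * p * s) * mulSnd G (x, p)))
    (bound := fun p => ‖mulSnd G (x, p)‖) Filter.univ_mem
    (.of_forall fun s => (integrable_cexp_mul_comp_mk_left G x s).aestronglyMeasurable)
    (integrable_cexp_mul_comp_mk_left G x ξ)
    ((integrable_cexp_mul_comp_mk_left _ x ξ).const_mul I).aestronglyMeasurable
    (.of_forall fun p s _ => ?_) ((mulSnd G).integrable_comp_mk_left x).norm
    (.of_forall fun p s _ => ?_)).2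
  · simp [norm_cexp_I_mul_ofReal_mul_ofReal]
  · refine ((hasDerivAt_cexp_const_mul_ofReal (I * p) s).mul_const (G (x, p))).congr_deriv ?_
    rw [mulSnd_apply]
    ring

theorem partialFourier_lineDerivOp_snd (G : 𝓢(ℝ × ℝ, ℂ)) (x ξ : ℝ) :
    partialFourier x ξ (∂_{e₂} G) = -(I * ξ) * partialFourier x ξ G := by
  have hu : ∀ p : ℝ,
      HasDerivAt (fun q : ℝ => cexp (I * q * ξ)) (I * ξ * cexp (I * p * ξ)) p := by
    intro p
    simp_rw [mul_right_comm I]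
    exact hasDerivAt_cexp_const_mul_ofReal (I * ξ) p
  simp only [partialFourier_apply]
  rw [integral_mul_deriv_eq_deriv_mul_of_integrable (fun p _ => hu p)
    (fun p _ => G.hasDerivAt_comp_mk_right x p) (integrable_cexp_mul_comp_mk_left _ x ξ)
    (by simpa only [Pi.mul_def, mul_assoc] using
      (integrable_cexp_mul_comp_mk_left G x ξ).const_mul (I * ξ))
    (integrable_cexp_mul_comp_mk_left G x ξ), ← integral_const_mul, ← integral_neg]
  congr 1 with p
  ring

theorem deriv_deriv_partialFourier_fst (G : 𝓢(ℝ × ℝ, ℂ)) (x ξ : ℝ) :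
    deriv (deriv fun t => partialFourier t ξ G) x =
      partialFourier x ξ (∂_{e₁} (∂_{e₁} G)) := by
  rw [funext fun t => (hasDerivAt_partialFourier_fst G t ξ).deriv]
  exact (hasDerivAt_partialFourier_fst _ x ξ).deriv

theorem deriv_deriv_partialFourier_snd (G : 𝓢(ℝ × ℝ, ℂ)) (x ξ : ℝ) :
    deriv (deriv fun s => partialFourier x s G) ξ = -partialFourier x ξ (mulSnd (mulSnd G)) := by
  rw [funext fun s => (hasDerivAt_partialFourier_snd G x s).deriv,
    ((hasDerivAt_partialFourier_snd _ x ξ).const_mul I).deriv, ← mul_assoc, I_mul_I, neg_one_mul]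

theorem partialFourier_lineDerivOp_lineDerivOp_snd (G : 𝓢(ℝ × ℝ, ℂ)) (x ξ : ℝ) :
    partialFourier x ξ (∂_{e₂} (∂_{e₂} G)) = -(ξ : ℂ) ^ 2 * partialFourier x ξ G := by
  rw [partialFourier_lineDerivOp_snd, partialFourier_lineDerivOp_snd]
  linear_combination (ξ : ℂ) ^ 2 * partialFourier x ξ G * I_mul_I

noncomputable def wignerRotation : (ℝ × ℝ) ≃L[ℝ] ℝ × ℝ :=
  LinearEquiv.toContinuousLinearEquiv
    { toFun v := ((v.1 + v.2) / √2, (v.1 - v.2) / √2)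
      invFun v := ((v.1 + v.2) / √2, (v.1 - v.2) / √2)
      map_add' v w := by ext <;> simp only [Prod.fst_add, Prod.snd_add] <;> ring
      map_smul' c v := by
        ext <;> simp only [Prod.smul_fst, Prod.smul_snd, smul_eq_mul, RingHom.id_apply] <;> ring
      left_inv v := by ext <;> field_simp <;> ring_nf <;> norm_num
      right_inv v := by ext <;> field_simp <;> ring_nf <;> norm_num }

theorem wignerRotation_apply (v : ℝ × ℝ) :
    wignerRotation v = ((v.1 + v.2) / √2, (v.1 - v.2) / √2) := rfl

theorem sq_add_sq_wignerRotation (v : ℝ × ℝ) :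
    (wignerRotation v).1 ^ 2 + (wignerRotation v).2 ^ 2 = v.1 ^ 2 + v.2 ^ 2 := by
  simp only [wignerRotation_apply, div_pow, Real.sq_sqrt zero_le_two]
  ring

theorem wignerRotation_one_zero : wignerRotation e₁ = (√2)⁻¹ • (e₁ + e₂) := by
  ext <;> simp [wignerRotation_apply]

theorem wignerRotation_zero_one : wignerRotation e₂ = (√2)⁻¹ • (e₁ - e₂) := by
  ext <;> simp [wignerRotation_apply, div_eq_inv_mul]

theorem lineDerivOp_comp_wignerRotation {V : Type*} [NormedAddCommGroup V] [NormedSpace ℂ V]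
    (G : 𝓢(ℝ × ℝ, V)) :
    ∂_{e₁} (∂_{e₁} (compCLMOfContinuousLinearEquiv ℂ wignerRotation G)) +
        ∂_{e₂} (∂_{e₂} (compCLMOfContinuousLinearEquiv ℂ wignerRotation G)) =
      compCLMOfContinuousLinearEquiv ℂ wignerRotation
        (∂_{e₁} (∂_{e₁} G) + ∂_{e₂} (∂_{e₂} G)) := by
  have hs : ((√2)⁻¹ ^ 2 * 2 : ℝ) = 1 := by
    rw [inv_pow, Real.sq_sqrt zero_le_two, inv_mul_cancel₀ two_ne_zero]
  simp only [lineDerivOp_compCLMOfContinuousLinearEquiv, ← map_add, wignerRotation_one_zero,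
    wignerRotation_zero_one, lineDerivOp_lineDerivOp_left_smul, ← smul_add,
    lineDerivOp_parallelogram, ← Nat.cast_smul_eq_nsmul ℝ, smul_smul, Nat.cast_ofNat, hs,
    one_smul]

theorem hasTemperateGrowth_ofReal_fst :
    Function.HasTemperateGrowth fun v : ℝ × ℝ => (v.1 : ℂ) :=
  (ofRealCLM.comp (ContinuousLinearMap.fst ℝ ℝ ℝ)).hasTemperateGrowth

theorem hasTemperateGrowth_sq_add_sq :
    Function.HasTemperateGrowth fun v : ℝ × ℝ => (v.1 : ℂ) ^ 2 + (v.2 : ℂ) ^ 2 :=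
  (hasTemperateGrowth_ofReal_fst.pow 2).add (hasTemperateGrowth_ofReal_snd.pow 2)

noncomputable def mulSqAddSq : 𝓢(ℝ × ℝ, ℂ) →L[ℂ] 𝓢(ℝ × ℝ, ℂ) :=
  smulLeftCLM ℂ fun v : ℝ × ℝ => (v.1 : ℂ) ^ 2 + (v.2 : ℂ) ^ 2

theorem mulSqAddSq_apply (G : 𝓢(ℝ × ℝ, ℂ)) (v : ℝ × ℝ) :
    mulSqAddSq G v = ((v.1 : ℂ) ^ 2 + (v.2 : ℂ) ^ 2) * G v := by
  simp [mulSqAddSq, smulLeftCLM_apply_apply hasTemperateGrowth_sq_add_sq]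

noncomputable def oscillator (G : 𝓢(ℝ × ℝ, ℂ)) : 𝓢(ℝ × ℝ, ℂ) :=
  (1 / 2 : ℂ) • (mulSqAddSq G - (∂_{e₁} (∂_{e₁} G) + ∂_{e₂} (∂_{e₂} G)))

theorem mulSqAddSq_comp_wignerRotation (G : 𝓢(ℝ × ℝ, ℂ)) :
    mulSqAddSq (compCLMOfContinuousLinearEquiv ℂ wignerRotation G) =
      compCLMOfContinuousLinearEquiv ℂ wignerRotation (mulSqAddSq G) := by
  ext v
  have h := congrArg ((↑) : ℝ → ℂ) (sq_add_sq_wignerRotation v)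
  push_cast at h
  simp [mulSqAddSq_apply, h]

theorem oscillator_comp_wignerRotation (G : 𝓢(ℝ × ℝ, ℂ)) :
    oscillator (compCLMOfContinuousLinearEquiv ℂ wignerRotation G) =
      compCLMOfContinuousLinearEquiv ℂ wignerRotation (oscillator G) := by
  rw [oscillator, oscillator, lineDerivOp_comp_wignerRotation,
    mulSqAddSq_comp_wignerRotation, ← map_sub, ← map_smul]

theorem ham_eq_oscillator (G : 𝓢(ℝ × ℝ, ℂ)) (a b : ℝ) :
    Ham (fun a b => G (a, b)) a b = oscillator G (a, b) := by
  simp only [Ham, oscillator, deriv_deriv_comp_mk_left, deriv_deriv_comp_mk_right, smul_apply,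
    sub_apply, add_apply, mulSqAddSq_apply, smul_eq_mul]
  ring

theorem partialFourier_mulSqAddSq (G : 𝓢(ℝ × ℝ, ℂ)) (x ξ : ℝ) :
    partialFourier x ξ (mulSqAddSq G) =
      (x : ℂ) ^ 2 * partialFourier x ξ G + partialFourier x ξ (mulSnd (mulSnd G)) := by
  simp only [partialFourier_apply, ← integral_const_mul]
  rw [← integral_add ((integrable_cexp_mul_comp_mk_left G x ξ).const_mul _)
    (integrable_cexp_mul_comp_mk_left _ x ξ)]
  congr 1 with p
  simp only [mulSqAddSq_apply, mulSnd_apply]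
  ring

theorem ham_partialFourier (G : 𝓢(ℝ × ℝ, ℂ)) (c : ℂ) (x ξ : ℝ) :
    Ham (fun x ξ => c * partialFourier x ξ G) x ξ = c * partialFourier x ξ (oscillator G) := by
  simp only [Ham, deriv_const_mul_field', deriv_deriv_partialFourier_fst,
    deriv_deriv_partialFourier_snd, oscillator, map_smul, map_sub, map_add,
    partialFourier_mulSqAddSq, partialFourier_lineDerivOp_lineDerivOp_snd, smul_eq_mul]
  ring

theorem extW_eq_partialFourier (G : 𝓢(ℝ × ℝ, ℂ)) :
    ExtW (fun a b => G (a, b)) = fun x ξ =>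
      (√(2 * Real.pi) : ℂ)⁻¹ *
        partialFourier x ξ (compCLMOfContinuousLinearEquiv ℂ wignerRotation G) :=
  rfl

/-- The extended Wigner transform commutes with the harmonic oscillator. -/
theorem extW_commute_ham (F : SchwartzMap (ℝ × ℝ) ℂ) (x y : ℝ) :
    Ham (ExtW (fun a b => F (a, b))) x y
      = ExtW (Ham (fun a b => F (a, b))) x y := by
  calc Ham (ExtW fun a b => F (a, b)) x y
      = (√(2 * Real.pi) : ℂ)⁻¹ *
          partialFourier x y
            (oscillator (compCLMOfContinuousLinearEquiv ℂ wignerRotation F)) := by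
        rw [extW_eq_partialFourier, ham_partialFourier]
    _ = ExtW (Ham fun a b => F (a, b)) x y := by
        rw [oscillator_comp_wignerRotation, funext₂ (ham_eq_oscillator F), extW_eq_partialFourier]
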